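/- arXiv:1502.04070 — 4 statements merged into one kernel-verified Lean document; each statement's English description precedes it below -/
import Mathlib

section
/- Let Δ = {(ξ₁, ξ₂) ∈ (0,1)² : ξ₁ + ξ₂ < 1} be the reference triangle and ψ(ξ₁, ξ₂) = 1 − ξ₂. Then for every affine function p(ξ₁, ξ₂) = a₀ + a₁ξ₁ + a₂ξ₂, the inequality ∫_Δ p² dξ ≤ (1/3)(6 + √6) ∫_Δ ψ p² dξ holds. -/
open MeasureTheory

/-- The reference triangle `Δ = {(ξ₁, ξ₂) ∈ (0,1)² : ξ₁ + ξ₂ < 1}`. -/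
def refTriangle : Set (ℝ × ℝ) :=
  {ξ : ℝ × ℝ | ξ.1 ∈ Set.Ioo (0 : ℝ) 1 ∧ ξ.2 ∈ Set.Ioo (0 : ℝ) 1 ∧ ξ.1 + ξ.2 < 1}

lemma isOpen_refTriangle : IsOpen refTriangle := by
  have h1 : IsOpen {ξ : ℝ × ℝ | ξ.1 ∈ Set.Ioo (0:ℝ) 1} :=
    (isOpen_Ioo.preimage continuous_fst)
  have h2 : IsOpen {ξ : ℝ × ℝ | ξ.2 ∈ Set.Ioo (0:ℝ) 1} :=
    (isOpen_Ioo.preimage continuous_snd)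
  have h3 : IsOpen {ξ : ℝ × ℝ | ξ.1 + ξ.2 < 1} :=
    isOpen_lt (continuous_fst.add continuous_snd) continuous_const
  exact h1.inter (h2.inter h3)

lemma polyInt (A B C D E t : ℝ) :
    ∫ y in (0:ℝ)..t, (A + B*y + C*y^2 + D*y^3 + E*y^4)
      = A*t + B*t^2/2 + C*t^3/3 + D*t^4/4 + E*t^5/5 := by
  have key : ∀ y ∈ Set.uIcc (0:ℝ) t,
      HasDerivAt (fun y : ℝ => A*y + B*y^2/2 + C*y^3/3 + D*y^4/4 + E*y^5/5)
        (A + B*y + C*y^2 + D*y^3 + E*y^4) y := by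
    intro y _
    have h : HasDerivAt (fun y : ℝ => A*y + B*y^2/2 + C*y^3/3 + D*y^4/4 + E*y^5/5)
        (A*1 + B*(2*y^1)/2 + C*(3*y^2)/3 + D*(4*y^3)/4 + E*(5*y^4)/5) y := by
      exact ((((((hasDerivAt_id y).const_mul A).add
        (((hasDerivAt_pow 2 y).const_mul B).div_const 2)).add
        (((hasDerivAt_pow 3 y).const_mul C).div_const 3)).add
        (((hasDerivAt_pow 4 y).const_mul D).div_const 4)).add
        (((hasDerivAt_pow 5 y).const_mul E).div_const 5))
    convert h using 1; ring
  have hint : IntervalIntegrable (fun y : ℝ => A + B*y + C*y^2 + D*y^3 + E*y^4)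
      volume 0 t := by
    apply Continuous.intervalIntegrable; continuity
  rw [intervalIntegral.integral_eq_sub_of_hasDerivAt key hint]
  ring

lemma refTriangle_integral (f : ℝ × ℝ → ℝ) (hf : Continuous f) :
    ∫ ξ in refTriangle, f ξ = ∫ x in (0:ℝ)..1, ∫ y in (0:ℝ)..(1-x), f (x, y) := by
  have hmeas : MeasurableSet refTriangle := isOpen_refTriangle.measurableSet
  have hsub : refTriangle ⊆ Set.Icc (0:ℝ) 1 ×ˢ Set.Icc (0:ℝ) 1 := by
    rintro ⟨x, y⟩ ⟨h1, h2, _⟩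
    exact ⟨⟨le_of_lt h1.1, le_of_lt h1.2⟩, ⟨le_of_lt h2.1, le_of_lt h2.2⟩⟩
  have hIcc : IsCompact (Set.Icc (0:ℝ) 1 ×ˢ Set.Icc (0:ℝ) 1) :=
    isCompact_Icc.prod isCompact_Icc
  have hintOn : IntegrableOn f refTriangle volume :=
    (hf.continuousOn.integrableOn_compact hIcc).mono_set hsub
  have hind : Integrable (refTriangle.indicator f) volume :=
    (integrable_indicator_iff hmeas).2 hintOn
  rw [← integral_indicator hmeas]
  rw [Measure.volume_eq_prod] at hind ⊢
  rw [integral_prod _ hind]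
  have slice : ∀ x : ℝ, (∫ y, refTriangle.indicator f (x, y))
      = Set.indicator (Set.Ioo (0:ℝ) 1)
          (fun x => ∫ y in Set.Ioo (0:ℝ) (1-x), f (x, y)) x := by
    intro x
    by_cases hx : x ∈ Set.Ioo (0:ℝ) 1
    · rw [Set.indicator_of_mem hx]
      have : (fun y => refTriangle.indicator f (x, y))
          = (Set.Ioo (0:ℝ) (1-x)).indicator (fun y => f (x, y)) := by
        funext y
        by_cases hy : y ∈ Set.Ioo (0:ℝ) (1-x)
        · rw [Set.indicator_of_mem hy, Set.indicator_of_mem]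
          exact ⟨hx, ⟨hy.1, lt_of_lt_of_le hy.2 (by linarith [hx.1])⟩, by linarith [hy.2]⟩
        · rw [Set.indicator_of_notMem hy, Set.indicator_of_notMem]
          rintro ⟨_, h2, h3⟩
          exact hy ⟨h2.1, by linarith⟩
      rw [this, integral_indicator measurableSet_Ioo]
    · rw [Set.indicator_of_notMem hx]
      have : (fun y => refTriangle.indicator f (x, y)) = fun _ => (0:ℝ) := by
        funext y
        rw [Set.indicator_of_notMem]
        rintro ⟨h1, _, _⟩; exact hx h1
      rw [this, integral_zero]
  simp_rw [slice]
  rw [integral_indicator measurableSet_Ioo]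
  rw [intervalIntegral.integral_of_le (by norm_num : (0:ℝ) ≤ 1),
    ← integral_Ioc_eq_integral_Ioo]
  apply setIntegral_congr_fun measurableSet_Ioc
  intro x hx
  dsimp only
  rw [intervalIntegral.integral_of_le (by linarith [hx.2] : (0:ℝ) ≤ 1 - x),
    ← integral_Ioc_eq_integral_Ioo]

theorem stmt1 (a0 a1 a2 : ℝ) :
    (∫ ξ in refTriangle, (a0 + a1 * ξ.1 + a2 * ξ.2) ^ 2) ≤
      (1 / 3) * (6 + Real.sqrt 6) *
        ∫ ξ in refTriangle, (1 - ξ.2) * (a0 + a1 * ξ.1 + a2 * ξ.2) ^ 2 := by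
  have h1 : (∫ ξ in refTriangle, (a0 + a1 * ξ.1 + a2 * ξ.2) ^ 2)
      = a0^2/2 + a0*a1/3 + a0*a2/3 + a1^2/12 + a1*a2/12 + a2^2/12 := by
    rw [refTriangle_integral (fun ξ => (a0 + a1 * ξ.1 + a2 * ξ.2) ^ 2) (by continuity)]
    have inner : ∀ x : ℝ, (∫ y in (0:ℝ)..(1-x), (a0 + a1 * (x,y).1 + a2 * (x,y).2) ^ 2)
        = (a0*a0 + a0*a2 + a2*a2/3)
          + (-a0*a0 + 2*a0*a1 - 2*a0*a2 + a1*a2 - a2*a2)*x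
          + (-2*a0*a1 + a1*a1 + a0*a2 - 2*a1*a2 + a2*a2)*x^2
          + (-a1*a1 + a1*a2 - a2*a2/3)*x^3 + 0*x^4 := by
      intro x
      rw [show (fun y => (a0 + a1 * (x,y).1 + a2 * (x,y).2) ^ 2)
          = fun y => ((a0+a1*x)^2) + (2*a2*(a0+a1*x))*y + (a2^2)*y^2 + 0*y^3 + 0*y^4 from
        funext fun y => by ring, polyInt]
      ring
    simp_rw [inner, polyInt]
    ring
  have h2 : (∫ ξ in refTriangle, (1 - ξ.2) * (a0 + a1 * ξ.1 + a2 * ξ.2) ^ 2)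
      = a0^2/3 + a0*a1/4 + a0*a2/6 + a1^2/15 + a1*a2/20 + a2^2/30 := by
    rw [refTriangle_integral (fun ξ => (1 - ξ.2) * (a0 + a1 * ξ.1 + a2 * ξ.2) ^ 2)
      (by continuity)]
    have inner : ∀ x : ℝ,
        (∫ y in (0:ℝ)..(1-x), (1 - (x,y).2) * (a0 + a1 * (x,y).1 + a2 * (x,y).2) ^ 2)
        = (a0*a0/2 + a0*a2/3 + a2*a2/12)
          + (a0*a1 + a1*a2/3)*x
          + (a1*a1/2 - a0*a2 - a0*a0/2 - a2*a2/2)*x^2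
          + (-a1*a2 - a0*a1 + 2*a2*a2/3 + 2*a0*a2/3)*x^3
          + (-a1*a1/2 + 2*a1*a2/3 - a2*a2/4)*x^4 := by
      intro x
      rw [show (fun y => (1 - (x,y).2) * (a0 + a1 * (x,y).1 + a2 * (x,y).2) ^ 2)
          = fun y => ((a0+a1*x)^2) + (2*a2*(a0+a1*x) - (a0+a1*x)^2)*y
              + (a2^2 - 2*a2*(a0+a1*x))*y^2 + (-(a2^2))*y^3 + 0*y^4 from
        funext fun y => by ring, polyInt]
      ring
    simp_rw [inner, polyInt]
    ring
  rw [h1, h2]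
  have hs : (0:ℝ) ≤ Real.sqrt 6 := Real.sqrt_nonneg 6
  have h6 : Real.sqrt 6 ^ 2 = 6 := Real.sq_sqrt (by norm_num)
  set s := Real.sqrt 6 with hsdef
  have key : (6 + s) * (a0^2/3 + a0*a1/4 + a0*a2/6 + a1^2/15 + a1*a2/20 + a2^2/30)
      - 3 * (a0^2/2 + a0*a1/3 + a0*a2/3 + a1^2/12 + a1*a2/12 + a2^2/12)
      = (1/800) * (20*a0 + (6+s)*a1 + (8-2*s)*a2)^2
        + (s/1200) * (20*a0 + (6+s)*a1 + (8-2*s)*a2)^2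
        + (3/80) * a1^2 + (s/60) * a1^2 := by
    linear_combination ((-9/800)*a1*a1 + (7/600)*a1*a2 + (13/600)*a2*a2 + (-1/30)*a0*a1
      + (1/15)*a0*a2 + ((-1/1200)*a1*a1 + (1/300)*a1*a2 + (-1/300)*a2*a2) * s) * h6
  have hT2 : (0:ℝ) ≤ (20*a0 + (6+s)*a1 + (8-2*s)*a2)^2 := sq_nonneg _
  have step : 3 * (a0^2/2 + a0*a1/3 + a0*a2/3 + a1^2/12 + a1*a2/12 + a2^2/12)
      ≤ (6 + s) * (a0^2/3 + a0*a1/4 + a0*a2/6 + a1^2/15 + a1*a2/20 + a2^2/30) := by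
    nlinarith [mul_nonneg hs hT2, hT2, sq_nonneg a1, mul_nonneg hs (sq_nonneg a1)]
  linarith [step]
end

section
/- Let Δ = {(ξ₁, ξ₂) ∈ (0,1)² : ξ₁ + ξ₂ < 1} be the reference triangle and ψ(ξ₁, ξ₂) = ξ₂. Then for every affine function p(ξ₁, ξ₂) = a₀ + a₁ξ₁ + a₂ξ₂, the inequality ∫_Δ p² dξ ≤ (4 + √6) ∫_Δ ψ p² dξ holds. -/
open MeasureTheory

lemma refTriangle_measurableSet : MeasurableSet refTriangle := by
  have h1 : refTriangle =
      ((fun p : ℝ × ℝ => p.1) ⁻¹' Set.Ioo 0 1) ∩ ((fun p : ℝ × ℝ => p.2) ⁻¹' Set.Ioo 0 1) ∩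
        ((fun p : ℝ × ℝ => p.1 + p.2) ⁻¹' Set.Iio 1) := by
    ext p; simp [refTriangle, and_assoc]
  rw [h1]
  exact (((measurable_fst (measurableSet_Ioo)).inter
    (measurable_snd (measurableSet_Ioo)))).inter
    ((measurable_fst.add measurable_snd) measurableSet_Iio)

lemma monomial_integral (c : ℝ) (k : ℕ) (t : ℝ) :
    ∫ y in (0:ℝ)..t, c * y ^ k = c * t ^ (k + 1) / (k + 1) := by
  rw [intervalIntegral.integral_const_mul, integral_pow]
  ring

lemma cubic_integral (c0 c1 c2 c3 t : ℝ) :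
    ∫ y in (0:ℝ)..t, (c0 * y ^ 0 + c1 * y ^ 1 + c2 * y ^ 2 + c3 * y ^ 3)
      = c0 * t + c1 * t ^ 2 / 2 + c2 * t ^ 3 / 3 + c3 * t ^ 4 / 4 := by
  have ii : ∀ (c : ℝ) (k : ℕ), IntervalIntegrable (fun y : ℝ => c * y ^ k) volume 0 t :=
    fun c k => ((continuous_const.mul (continuous_pow k)).intervalIntegrable 0 t)
  rw [intervalIntegral.integral_add (((ii c0 0).add (ii c1 1)).add (ii c2 2)) (ii c3 3),
    intervalIntegral.integral_add ((ii c0 0).add (ii c1 1)) (ii c2 2),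
    intervalIntegral.integral_add (ii c0 0) (ii c1 1),
    monomial_integral, monomial_integral, monomial_integral, monomial_integral]
  norm_num

lemma quartic_integral (c0 c1 c2 c3 c4 : ℝ) :
    ∫ x in (0:ℝ)..1, (c0 * x ^ 0 + c1 * x ^ 1 + c2 * x ^ 2 + c3 * x ^ 3 + c4 * x ^ 4)
      = c0 + c1 / 2 + c2 / 3 + c3 / 4 + c4 / 5 := by
  have ii : ∀ (c : ℝ) (k : ℕ), IntervalIntegrable (fun y : ℝ => c * y ^ k) volume 0 1 :=
    fun c k => ((continuous_const.mul (continuous_pow k)).intervalIntegrable 0 1)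
  rw [intervalIntegral.integral_add ((((ii c0 0).add (ii c1 1)).add (ii c2 2)).add (ii c3 3))
      (ii c4 4),
    intervalIntegral.integral_add (((ii c0 0).add (ii c1 1)).add (ii c2 2)) (ii c3 3),
    intervalIntegral.integral_add ((ii c0 0).add (ii c1 1)) (ii c2 2),
    intervalIntegral.integral_add (ii c0 0) (ii c1 1),
    monomial_integral, monomial_integral, monomial_integral, monomial_integral,
    monomial_integral]
  norm_num

/-- Fubini reduction of the triangle integral to an iterated interval integral. -/
lemma triangle_integral (f : ℝ × ℝ → ℝ) (hf : Continuous f) :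
    ∫ ξ in refTriangle, f ξ = ∫ x in (0:ℝ)..1, ∫ y in (0:ℝ)..(1 - x), f (x, y) := by
  have hS : MeasurableSet refTriangle := refTriangle_measurableSet
  -- integrability
  have hsub : refTriangle ⊆ Set.Icc ((0:ℝ), (0:ℝ)) (1, 1) := by
    rintro ⟨x, y⟩ ⟨hx, hy, _⟩
    exact ⟨⟨hx.1.le, hy.1.le⟩, ⟨hx.2.le, hy.2.le⟩⟩
  have hI : IntegrableOn f refTriangle volume :=
    (hf.continuousOn.integrableOn_compact isCompact_Icc).mono_set hsub
  have hInd : Integrable (refTriangle.indicator f) volume :=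
    (integrable_indicator_iff hS).mpr hI
  rw [← integral_indicator hS]
  rw [show (volume : Measure (ℝ × ℝ)) = volume.prod volume from rfl] at hInd ⊢
  rw [MeasureTheory.integral_prod _ hInd]
  have key : ∀ x : ℝ, (∫ y, refTriangle.indicator f (x, y))
      = (Set.Ioo (0:ℝ) 1).indicator (fun x => ∫ y in Set.Ioo 0 (1 - x), f (x, y)) x := by
    intro x
    by_cases hx : x ∈ Set.Ioo (0:ℝ) 1
    · have hpt : ∀ y : ℝ, refTriangle.indicator f (x, y)
          = (Set.Ioo (0:ℝ) (1 - x)).indicator (fun y => f (x, y)) y := by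
        intro y
        by_cases hy : y ∈ Set.Ioo (0:ℝ) (1 - x)
        · have hmem : (x, y) ∈ refTriangle :=
            ⟨hx, ⟨hy.1, by have := hy.2; have := hx.1; linarith⟩, by have := hy.2; linarith⟩
          rw [Set.indicator_of_mem hmem, Set.indicator_of_mem hy]
        · have hnot : (x, y) ∉ refTriangle := by
            intro hmem
            exact hy ⟨hmem.2.1.1, by have := hmem.2.2; linarith⟩
          rw [Set.indicator_of_notMem hnot, Set.indicator_of_notMem hy]
      rw [Set.indicator_of_mem hx]
      simp only [hpt]
      exact integral_indicator measurableSet_Ioo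
    · have hpt : ∀ y : ℝ, refTriangle.indicator f (x, y) = 0 := by
        intro y
        have hnot : (x, y) ∉ refTriangle := fun hmem => hx hmem.1
        exact Set.indicator_of_notMem hnot f
      rw [Set.indicator_of_notMem hx]
      simp only [hpt, integral_zero]
  simp only [key]
  rw [integral_indicator measurableSet_Ioo,
    intervalIntegral.integral_of_le zero_le_one, MeasureTheory.integral_Ioc_eq_integral_Ioo]
  refine setIntegral_congr_fun measurableSet_Ioo fun x hx => ?_
  rw [intervalIntegral.integral_of_le (by linarith [hx.2] : (0:ℝ) ≤ 1 - x),
    MeasureTheory.integral_Ioc_eq_integral_Ioo]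

theorem stmt2 (a0 a1 a2 : ℝ) :
    (∫ ξ in refTriangle, (a0 + a1 * ξ.1 + a2 * ξ.2) ^ 2) ≤
      (4 + Real.sqrt 6) *
        ∫ ξ in refTriangle, ξ.2 * (a0 + a1 * ξ.1 + a2 * ξ.2) ^ 2 := by
  -- compute the left integral
  have hL : (∫ ξ in refTriangle, (a0 + a1 * ξ.1 + a2 * ξ.2) ^ 2)
      = a0^2/2 + a1^2/12 + a2^2/12 + a0*a1/3 + a0*a2/3 + a1*a2/12 := by
    rw [triangle_integral (fun ξ => (a0 + a1 * ξ.1 + a2 * ξ.2) ^ 2) (by fun_prop)]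
    have hin : ∀ x : ℝ, (∫ y in (0:ℝ)..(1 - x), (a0 + a1 * x + a2 * y) ^ 2)
        = (a0 + a1*x)^2 * (1-x) + (2*(a0+a1*x)*a2) * (1-x)^2/2 + a2^2 * (1-x)^3/3
          + 0 * (1-x)^4/4 := by
      intro x
      rw [show (fun y : ℝ => (a0 + a1 * x + a2 * y) ^ 2)
          = fun y : ℝ => (a0 + a1*x)^2 * y^0 + (2*(a0+a1*x)*a2) * y^1 + a2^2 * y^2 + 0 * y^3
        from funext fun y => by ring]
      exact cubic_integral _ _ _ _ _
    simp only [hin]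
    rw [show (fun x : ℝ => (a0 + a1*x)^2 * (1-x) + (2*(a0+a1*x)*a2) * (1-x)^2/2
          + a2^2 * (1-x)^3/3 + 0 * (1-x)^4/4)
        = fun x : ℝ => (a0^2 + a0*a2 + a2^2/3) * x^0
          + (-a0^2 + 2*a0*a1 - 2*a0*a2 + a1*a2 - a2^2) * x^1
          + (-2*a0*a1 + a1^2 + a0*a2 - 2*a1*a2 + a2^2) * x^2
          + (-a1^2 + a1*a2 - a2^2/3) * x^3 + 0 * x^4
      from funext fun x => by ring]
    rw [quartic_integral]
    ring
  -- compute the right integral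
  have hR : (∫ ξ in refTriangle, ξ.2 * (a0 + a1 * ξ.1 + a2 * ξ.2) ^ 2)
      = a0^2/6 + a1^2/60 + a2^2/20 + a0*a1/12 + a0*a2/6 + a1*a2/30 := by
    rw [triangle_integral (fun ξ => ξ.2 * (a0 + a1 * ξ.1 + a2 * ξ.2) ^ 2) (by fun_prop)]
    have hin : ∀ x : ℝ, (∫ y in (0:ℝ)..(1 - x), y * (a0 + a1 * x + a2 * y) ^ 2)
        = 0 * (1-x) + (a0 + a1*x)^2 * (1-x)^2/2 + (2*(a0+a1*x)*a2) * (1-x)^3/3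
          + a2^2 * (1-x)^4/4 := by
      intro x
      rw [show (fun y : ℝ => y * (a0 + a1 * x + a2 * y) ^ 2)
          = fun y : ℝ => 0 * y^0 + (a0 + a1*x)^2 * y^1 + (2*(a0+a1*x)*a2) * y^2 + a2^2 * y^3
        from funext fun y => by ring]
      exact cubic_integral _ _ _ _ _
    simp only [hin]
    rw [show (fun x : ℝ => 0 * (1-x) + (a0 + a1*x)^2 * (1-x)^2/2
          + (2*(a0+a1*x)*a2) * (1-x)^3/3 + a2^2 * (1-x)^4/4)
        = fun x : ℝ => (a0^2/2 + 2*a0*a2/3 + a2^2/4) * x^0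
          + (-a0^2 + a0*a1 - 2*a0*a2 + 2*a1*a2/3 - a2^2) * x^1
          + (a0^2/2 - 2*a0*a1 + a1^2/2 + 2*a0*a2 - 2*a1*a2 + 3*a2^2/2) * x^2
          + (a0*a1 - a1^2 - 2*a0*a2/3 + 2*a1*a2 - a2^2) * x^3
          + (a1^2/2 - 2*a1*a2/3 + a2^2/4) * x^4
      from funext fun x => by ring]
    rw [quartic_integral]
    ring
  rw [hL, hR]
  -- algebraic inequality with s = √6
  set s := Real.sqrt 6 with hs
  have hs2 : s ^ 2 = 6 := Real.sq_sqrt (by norm_num)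
  have hs1 : (1:ℝ) ≤ s := by
    nlinarith [Real.sqrt_nonneg 6]
  have key : (4 + s) * (a0^2/6 + a1^2/60 + a2^2/20 + a0*a1/12 + a0*a2/6 + a1*a2/30)
      - (a0^2/2 + a1^2/12 + a2^2/12 + a0*a1/3 + a0*a2/3 + a1*a2/12)
      = (1 + s)/6 * (a0 + (6 - s)/20 * a1 + (4 + s)/10 * a2)^2 + (s - 1)/240 * a1^2 := by
    linear_combination ((11 - s)/2400 * a1^2 + (s - 1)/600 * a1*a2 - (s + 9)/600 * a2^2
      + a0*a1/60 - a0*a2/30) * hs2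
  have pos : (0:ℝ) ≤ (1 + s)/6 * (a0 + (6 - s)/20 * a1 + (4 + s)/10 * a2)^2
      + (s - 1)/240 * a1^2 :=
    add_nonneg (mul_nonneg (by linarith) (sq_nonneg _)) (mul_nonneg (by linarith) (sq_nonneg _))
  linarith [key, pos]
end

section
/- Let A and B be Hilbert spaces continuously embedded in a common Hausdorff topological vector space. Then the algebraic sum A + B, equipped with the norm ‖u‖²_{A+B} = inf{ ‖u₁‖²_A + ‖u₂‖²_B : u = u₁ + u₂, u₁ ∈ A, u₂ ∈ B }, is a Hilbert space. -/
/-!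
The sum `A + B` is the image of the Hilbert space `A × B` (with the `L²` norm) under
`(a, b) ↦ a + b`. Its kernel `K` is closed because `E` is Hausdorff, so this map restricts to a
linear bijection from `Kᗮ` onto `A + B`. Every other preimage of `u` differs from the one in `Kᗮ`
by an element of `K`, so by Pythagoras the infimum defining `‖u‖²` is attained there. Hence
`A + B` with the sum norm is isometric to the closed subspace `Kᗮ`, which is a Hilbert space.
-/

open LinearMap Submodule

theorem sq_norm_le_of_mem_orthogonal_of_sub_mem {F : Type*} [NormedAddCommGroup F]
    [InnerProductSpace ℝ F] {K : Submodule ℝ F} {w x : F} (hw : w ∈ Kᗮ) (hxw : x - w ∈ K) :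
    ‖w‖ ^ 2 ≤ ‖x‖ ^ 2 := by
  have hpyth : ‖x‖ ^ 2 = ‖w‖ ^ 2 + ‖x - w‖ ^ 2 := by
    conv_lhs => rw [← add_sub_cancel w x]
    rw [norm_add_sq_real, inner_left_of_mem_orthogonal hxw hw, mul_zero, add_zero]
  rw [hpyth]
  exact le_add_of_nonneg_right (sq_nonneg _)

namespace LinearMap

section RangeNorm

variable {F E : Type*} [NormedAddCommGroup F] [InnerProductSpace ℝ F] [AddCommGroup E]
  [Module ℝ E] (φ : F →ₗ[ℝ] E) [(ker φ).HasOrthogonalProjection]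

noncomputable def rangeEquivOrthogonalKer : range φ ≃ₗ[ℝ] (ker φ)ᗮ :=
  φ.quotKerEquivRange.symm.trans ((ker φ).quotientEquivOfIsCompl _ (ker φ).isCompl_orthogonal)

theorem map_rangeEquivOrthogonalKer (u : range φ) : φ (φ.rangeEquivOrthogonalKer u) = u := by
  conv_rhs => rw [← φ.rangeEquivOrthogonalKer.symm_apply_apply u]
  rfl

theorem isLeast_sq_norm_preimage (u : range φ) :
    IsLeast {r : ℝ | ∃ x, φ x = u ∧ r = ‖x‖ ^ 2} (‖φ.rangeEquivOrthogonalKer u‖ ^ 2) := by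
  refine ⟨⟨_, φ.map_rangeEquivOrthogonalKer u, rfl⟩, ?_⟩
  rintro _ ⟨x, hx, rfl⟩
  refine sq_norm_le_of_mem_orthogonal_of_sub_mem (φ.rangeEquivOrthogonalKer u).2 ?_
  rw [mem_ker, map_sub, hx, map_rangeEquivOrthogonalKer, sub_self]

noncomputable abbrev rangeNormedAddCommGroup : NormedAddCommGroup (range φ) :=
  .induced _ _ φ.rangeEquivOrthogonalKer φ.rangeEquivOrthogonalKer.injective

noncomputable abbrev rangeInnerProductSpace :
    @InnerProductSpace ℝ (range φ) _ φ.rangeNormedAddCommGroup.toSeminormedAddCommGroup :=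
  .induced φ.rangeEquivOrthogonalKer

attribute [local instance] rangeNormedAddCommGroup rangeInnerProductSpace

theorem sq_norm_range_eq_sInf (u : range φ) :
    ‖u‖ ^ 2 = sInf {r : ℝ | ∃ x, φ x = u ∧ r = ‖x‖ ^ 2} :=
  (φ.isLeast_sq_norm_preimage u).csInf_eq.symm

theorem completeSpace_range [CompleteSpace F] : CompleteSpace (range φ) :=
  have hiso : Isometry φ.rangeEquivOrthogonalKer :=
    AddMonoidHomClass.isometry_of_norm φ.rangeEquivOrthogonalKer fun _ => rfl
  (completeSpace_congr (e := φ.rangeEquivOrthogonalKer.toEquiv) hiso.isUniformEmbedding).mpr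
    inferInstance

end RangeNorm

end LinearMap

section L2Sum

variable {E A B : Type*} [AddCommGroup E] [Module ℝ E]
  [NormedAddCommGroup A] [InnerProductSpace ℝ A] [NormedAddCommGroup B] [InnerProductSpace ℝ B]

noncomputable def coprodL2 (f : A →ₗ[ℝ] E) (g : B →ₗ[ℝ] E) : WithLp 2 (A × B) →ₗ[ℝ] E :=
  f.coprod g ∘ₗ (WithLp.linearEquiv 2 ℝ (A × B)).toLinearMap

theorem coprodL2_apply (f : A →ₗ[ℝ] E) (g : B →ₗ[ℝ] E) (x : WithLp 2 (A × B)) :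
    coprodL2 f g x = f x.fst + g x.snd :=
  rfl

theorem range_coprodL2 (f : A →ₗ[ℝ] E) (g : B →ₗ[ℝ] E) :
    range (coprodL2 f g) = range f ⊔ range g := by
  rw [coprodL2, range_comp_of_range_eq_top _ (LinearEquiv.range _), range_coprod]

theorem isClosed_ker_coprodL2 [TopologicalSpace E] [T2Space E] (f : A →L[ℝ] E) (g : B →L[ℝ] E) :
    IsClosed (ker (coprodL2 f.toLinearMap g.toLinearMap) : Set (WithLp 2 (A × B))) := by
  have hker : (ker (coprodL2 f.toLinearMap g.toLinearMap) : Set (WithLp 2 (A × B))) =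
      {x | f x.fst = g (-x.snd)} := by
    ext x
    simp [coprodL2_apply, add_eq_zero_iff_eq_neg]
  rw [hker]
  exact isClosed_eq (by fun_prop) (by fun_prop)

theorem setOf_sq_norm_preimage_coprodL2 (f : A →ₗ[ℝ] E) (g : B →ₗ[ℝ] E) (u : E) :
    {r : ℝ | ∃ x, coprodL2 f g x = u ∧ r = ‖x‖ ^ 2} =
      {r : ℝ | ∃ a b, f a + g b = u ∧ r = ‖a‖ ^ 2 + ‖b‖ ^ 2} := by
  ext r
  constructor
  · rintro ⟨x, hx, rfl⟩
    exact ⟨x.fst, x.snd, hx, WithLp.prod_norm_sq_eq_of_L2 x⟩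
  · rintro ⟨a, b, hab, rfl⟩
    exact ⟨WithLp.toLp 2 (a, b), hab, (WithLp.prod_norm_sq_eq_of_L2 (WithLp.toLp 2 (a, b))).symm⟩

end L2Sum

theorem stmt4_general
    {E : Type*} [AddCommGroup E] [Module ℝ E] [TopologicalSpace E]
    [T2Space E]
    {A B : Type*}
    [NormedAddCommGroup A] [InnerProductSpace ℝ A] [CompleteSpace A]
    [NormedAddCommGroup B] [InnerProductSpace ℝ B] [CompleteSpace B]
    (iA : A →L[ℝ] E) (iB : B →L[ℝ] E)
    (S : Submodule ℝ E)
    (hS : S = LinearMap.range iA.toLinearMap ⊔ LinearMap.range iB.toLinearMap) :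
    ∃ (n : NormedAddCommGroup ↥S) (_ : @InnerProductSpace ℝ ↥S _ n.toSeminormedAddCommGroup),
      (∀ u : ↥S,
        ((n.toNorm.norm u : ℝ)) ^ 2 =
          sInf {r : ℝ | ∃ (a : A) (b : B), iA a + iB b = (u : E) ∧ r = ‖a‖ ^ 2 + ‖b‖ ^ 2}) ∧
      @CompleteSpace ↥S n.toMetricSpace.toPseudoMetricSpace.toUniformSpace := by
  set φ := coprodL2 iA.toLinearMap iB.toLinearMap
  have : CompleteSpace (ker φ) := (isClosed_ker_coprodL2 iA iB).completeSpace_coe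
  subst hS
  rw [← range_coprodL2]
  refine ⟨φ.rangeNormedAddCommGroup, φ.rangeInnerProductSpace, fun u => ?_, φ.completeSpace_range⟩
  rw [φ.sq_norm_range_eq_sInf, setOf_sq_norm_preimage_coprodL2]
  rfl

/-- Let `A` and `B` be Hilbert spaces continuously embedded (via injective continuous linear
maps `iA`, `iB`) in a common Hausdorff topological vector space `E`.  Then the algebraic sum
`A + B` (the submodule `S = range iA ⊔ range iB` of `E`), equipped with the norm
`‖u‖² = inf { ‖a‖²_A + ‖b‖²_B : u = iA a + iB b }`, is a Hilbert space: it carries a complete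
inner-product space structure whose norm is the above sum norm. -/
theorem stmt4
    {E : Type*} [AddCommGroup E] [Module ℝ E] [TopologicalSpace E]
    [IsTopologicalAddGroup E] [ContinuousSMul ℝ E] [T2Space E]
    {A B : Type*}
    [NormedAddCommGroup A] [InnerProductSpace ℝ A] [CompleteSpace A]
    [NormedAddCommGroup B] [InnerProductSpace ℝ B] [CompleteSpace B]
    (iA : A →L[ℝ] E) (iB : B →L[ℝ] E)
    (hiA : Function.Injective iA) (hiB : Function.Injective iB)
    (S : Submodule ℝ E)
    (hS : S = LinearMap.range iA.toLinearMap ⊔ LinearMap.range iB.toLinearMap) :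
    ∃ (n : NormedAddCommGroup ↥S) (_ : @InnerProductSpace ℝ ↥S _ n.toSeminormedAddCommGroup),
      (∀ u : ↥S,
        ((n.toNorm.norm u : ℝ)) ^ 2 =
          sInf {r : ℝ | ∃ (a : A) (b : B), iA a + iB b = (u : E) ∧ r = ‖a‖ ^ 2 + ‖b‖ ^ 2}) ∧
      @CompleteSpace ↥S n.toMetricSpace.toPseudoMetricSpace.toUniformSpace :=
  stmt4_general iA iB S hS
end

section
/- Let A and B be Hilbert spaces continuously embedded in a common Hausdorff topological vector space, with A ∩ B dense in both A and B. Then for every continuous linear functional f on A ∩ B that extends continuously to A + B, one has ‖f‖_{(A∩B)^*} = ‖f‖_{A^* + B^*}, i.e., the dual of the intersection space is the sum of the dual spaces with equal norms. -/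
/-!
A functional `f` on the intersection space, written as `f = f₁ + f₂` with `f₁ ∈ A*`, `f₂ ∈ B*`,
satisfies `|f (a, b)| ≤ ‖f₁‖ ‖a‖ + ‖f₂‖ ‖b‖ ≤ (‖f₁‖² + ‖f₂‖²)^{1/2} ‖(a, b)‖` by Cauchy–Schwarz
in `ℝ²`, so `‖f‖²` is a lower bound of the decomposition norms. Conversely, `A ∩ B` is a closed
subspace of the Hilbert space `A × B`, so `f = ⟪w, ·⟫` for some `w = (w₁, w₂)` with `‖w‖ = ‖f‖`,
and `f₁ = ⟪w₁, ·⟫`, `f₂ = ⟪w₂, ·⟫` is a decomposition attaining `‖w₁‖² + ‖w₂‖² = ‖f‖²`.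
-/

open InnerProductSpace

section Decomposition

variable {A B : Type*} [NormedAddCommGroup A] [InnerProductSpace ℝ A]
  [NormedAddCommGroup B] [InnerProductSpace ℝ B] {S : Submodule ℝ (WithLp 2 (A × B))}

lemma norm_sq_le_of_forall_eq_add {f : S →L[ℝ] ℝ} {f₁ : A →L[ℝ] ℝ} {f₂ : B →L[ℝ] ℝ}
    (hf : ∀ u : S, f u = f₁ (u : WithLp 2 (A × B)).fst + f₂ (u : WithLp 2 (A × B)).snd) :
    ‖f‖ ^ 2 ≤ ‖f₁‖ ^ 2 + ‖f₂‖ ^ 2 := by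
  have hbound : ∀ u : S, ‖f u‖ ≤ √(‖f₁‖ ^ 2 + ‖f₂‖ ^ 2) * ‖u‖ := by
    intro u
    set a := (u : WithLp 2 (A × B)).fst
    set b := (u : WithLp 2 (A × B)).snd
    have hu : ‖u‖ ^ 2 = ‖a‖ ^ 2 + ‖b‖ ^ 2 := WithLp.prod_norm_sq_eq_of_L2 _
    calc ‖f u‖ ≤ ‖f₁‖ * ‖a‖ + ‖f₂‖ * ‖b‖ := by
          rw [hf]
          exact (norm_add_le _ _).trans (add_le_add (f₁.le_opNorm a) (f₂.le_opNorm b))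
      _ ≤ √(‖f₁‖ ^ 2 + ‖f₂‖ ^ 2) * ‖u‖ := by
          rw [← Real.sqrt_sq (norm_nonneg u), ← Real.sqrt_mul (by positivity), hu]
          apply Real.le_sqrt_of_sq_le
          nlinarith [sq_nonneg (‖f₁‖ * ‖b‖ - ‖f₂‖ * ‖a‖)]
  calc ‖f‖ ^ 2 ≤ √(‖f₁‖ ^ 2 + ‖f₂‖ ^ 2) ^ 2 :=
        pow_le_pow_left₀ (norm_nonneg f) (f.opNorm_le_bound (Real.sqrt_nonneg _) hbound) 2
    _ = ‖f₁‖ ^ 2 + ‖f₂‖ ^ 2 := Real.sq_sqrt (by positivity)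

lemma exists_forall_eq_add_norm_sq_eq [CompleteSpace S] (f : S →L[ℝ] ℝ) :
    ∃ (f₁ : A →L[ℝ] ℝ) (f₂ : B →L[ℝ] ℝ),
      (∀ u : S, f u = f₁ (u : WithLp 2 (A × B)).fst + f₂ (u : WithLp 2 (A × B)).snd) ∧
      ‖f‖ ^ 2 = ‖f₁‖ ^ 2 + ‖f₂‖ ^ 2 := by
  set w : S := (toDual ℝ S).symm f
  refine ⟨innerSL ℝ (w : WithLp 2 (A × B)).fst, innerSL ℝ (w : WithLp 2 (A × B)).snd,
    fun u => ?_, ?_⟩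
  · rw [← toDual_symm_apply, Submodule.coe_inner, WithLp.prod_inner_apply]
    rfl
  · rw [innerSL_apply_norm, innerSL_apply_norm, ← WithLp.prod_norm_sq_eq_of_L2,
      ← (toDual ℝ S).symm.norm_map f]
    rfl

theorem norm_sq_eq_sInf_decomposition [CompleteSpace S] (f : S →L[ℝ] ℝ) :
    ‖f‖ ^ 2 = sInf {r : ℝ | ∃ (f₁ : A →L[ℝ] ℝ) (f₂ : B →L[ℝ] ℝ),
      (∀ u : S, f u = f₁ (u : WithLp 2 (A × B)).fst + f₂ (u : WithLp 2 (A × B)).snd) ∧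
      r = ‖f₁‖ ^ 2 + ‖f₂‖ ^ 2} := by
  refine (IsLeast.csInf_eq ⟨?_, ?_⟩).symm
  · obtain ⟨f₁, f₂, hf, hnorm⟩ := exists_forall_eq_add_norm_sq_eq f
    exact ⟨f₁, f₂, hf, hnorm⟩
  · rintro r ⟨f₁, f₂, hf, rfl⟩
    exact norm_sq_le_of_forall_eq_add hf

end Decomposition

lemma isClosed_setOf_fst_eq_snd {E A B : Type*} [AddCommGroup E] [Module ℝ E]
    [TopologicalSpace E] [T2Space E] [NormedAddCommGroup A] [NormedSpace ℝ A]
    [NormedAddCommGroup B] [NormedSpace ℝ B] (iA : A →L[ℝ] E) (iB : B →L[ℝ] E) :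
    IsClosed {x : WithLp 2 (A × B) | iA x.fst = iB x.snd} :=
  isClosed_eq (iA.continuous.comp (WithLp.continuous_fst ..))
    (iB.continuous.comp (WithLp.continuous_snd ..))

theorem stmt7_general
    {E A B : Type*} [AddCommGroup E] [Module ℝ E] [TopologicalSpace E]
    [T2Space E]
    [NormedAddCommGroup A] [InnerProductSpace ℝ A] [CompleteSpace A]
    [NormedAddCommGroup B] [InnerProductSpace ℝ B] [CompleteSpace B]
    (iA : A →L[ℝ] E) (iB : B →L[ℝ] E)
    (S : Submodule ℝ (WithLp 2 (A × B)))
    (hS : ∀ x : WithLp 2 (A × B), x ∈ S ↔ iA x.fst = iB x.snd)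
    (f : S →L[ℝ] ℝ) :
    ‖f‖ ^ 2 = sInf {r : ℝ | ∃ (f₁ : A →L[ℝ] ℝ) (f₂ : B →L[ℝ] ℝ),
      (∀ u : S, f u = f₁ (u : WithLp 2 (A × B)).fst + f₂ (u : WithLp 2 (A × B)).snd) ∧
      r = ‖f₁‖ ^ 2 + ‖f₂‖ ^ 2} := by
  have hclosed : IsClosed (S : Set (WithLp 2 (A × B))) := by
    convert isClosed_setOf_fst_eq_snd iA iB
    exact Set.ext hS
  have : CompleteSpace S := hclosed.completeSpace_coe
  exact norm_sq_eq_sInf_decomposition f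

/-- Duality of intersection and sum: let `A`, `B` be Hilbert spaces continuously embedded in a
common Hausdorff topological vector space `E`.  The intersection space `A ∩ B` is modelled as the
submodule `S = {(a,b) : iA a = iB b}` of the `ℓ²`-product `WithLp 2 (A × B)`, whose norm is
exactly `‖u‖² = ‖a‖²_A + ‖b‖²_B`.  Assume `A ∩ B` is dense in both `A` and `B`, and let `f` be a
continuous linear functional on `A ∩ B` that admits a decomposition `f = f₁ + f₂` with
`f₁ ∈ A*`, `f₂ ∈ B*` (i.e. `f` extends continuously to `A + B`).  Then the dual norm of `f`
satisfies `‖f‖²_{(A∩B)*} = inf { ‖f₁‖²_{A*} + ‖f₂‖²_{B*} : f = f₁ + f₂ }`. -/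
theorem stmt7
    {E A B : Type*} [AddCommGroup E] [Module ℝ E] [TopologicalSpace E]
    [IsTopologicalAddGroup E] [ContinuousSMul ℝ E] [T2Space E]
    [NormedAddCommGroup A] [InnerProductSpace ℝ A] [CompleteSpace A]
    [NormedAddCommGroup B] [InnerProductSpace ℝ B] [CompleteSpace B]
    (iA : A →L[ℝ] E) (iB : B →L[ℝ] E)
    (hiA : Function.Injective iA) (hiB : Function.Injective iB)
    (S : Submodule ℝ (WithLp 2 (A × B)))
    (hS : ∀ x : WithLp 2 (A × B), x ∈ S ↔ iA x.fst = iB x.snd)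
    (hdenseA : DenseRange (fun u : S => ((u : WithLp 2 (A × B)).fst : A)))
    (hdenseB : DenseRange (fun u : S => ((u : WithLp 2 (A × B)).snd : B)))
    (f : S →L[ℝ] ℝ)
    (hext : ∃ (f₁ : A →L[ℝ] ℝ) (f₂ : B →L[ℝ] ℝ),
      ∀ u : S, f u = f₁ (u : WithLp 2 (A × B)).fst + f₂ (u : WithLp 2 (A × B)).snd) :
    ‖f‖ ^ 2 = sInf {r : ℝ | ∃ (f₁ : A →L[ℝ] ℝ) (f₂ : B →L[ℝ] ℝ),
      (∀ u : S, f u = f₁ (u : WithLp 2 (A × B)).fst + f₂ (u : WithLp 2 (A × B)).snd) ∧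
      r = ‖f₁‖ ^ 2 + ‖f₂‖ ^ 2} :=
  stmt7_general iA iB S hS f
end
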